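/- arXiv:1606.06253 — 4 statements merged into one kernel-verified Lean document; each statement's English description precedes it below -/
import Mathlib

section
/- For a subshift of finite type, topological transitivity implies the weak specification property: there exists τ ∈ ℕ such that for every pair of words v, w in the language, there exists a word u of length at most τ with v u w in the language. -/
/-!
Let `N` bound the lengths of the forbidden words. Two points of the subshift that share a word
of length `N` at the same position can be spliced there, so the language is closed under gluing
along overlaps of length `N`. Extend `v` to the right by a word `a` of length `N` and `w` to the
left by a word `b` of length `N`; there are finitely many such pairs `(a, b)`, so transitivity
glues each by a word `u` of uniformly bounded length, and `v ++ (a ++ u ++ b) ++ w` lies in the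
language.
-/

namespace Subshift

variable {A : Type*}

def OccursAt (x : ℤ → A) (n : ℤ) (w : List A) : Prop :=
  ∀ i : Fin w.length, x (n + (i : ℕ)) = w.get i

def splice (x y : ℤ → A) (p : ℤ) : ℤ → A := fun k => if k < p then x k else y k

section Occurrences

variable {x y : ℤ → A} {n : ℤ} {v w : List A}

theorem occursAt_iff : OccursAt x n w ↔ ∀ j (hj : j < w.length), x (n + j) = w[j] :=
  ⟨fun h j hj => h ⟨j, hj⟩, fun h i => h i i.2⟩

theorem occursAt_append :
    OccursAt x n (v ++ w) ↔ OccursAt x n v ∧ OccursAt x (n + v.length) w := by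
  simp only [occursAt_iff, List.length_append]
  constructor
  · intro h
    refine ⟨fun j hj => ?_, fun j hj => ?_⟩
    · rw [h j (by omega), List.getElem_append_left hj]
    · rw [add_assoc, ← Nat.cast_add, h _ (by omega), List.getElem_append_right (by omega)]
      simp
  · rintro ⟨hv, hw⟩ j hj
    rcases lt_or_ge j v.length with hjv | hjv
    · rw [hv j hjv, List.getElem_append_left hjv]
    · obtain ⟨k, rfl⟩ := Nat.exists_eq_add_of_le hjv
      rw [Nat.cast_add, ← add_assoc, hw k (by omega), List.getElem_append_right (by omega)]
      simp

theorem occursAt_shift (c : ℤ) : OccursAt (fun k => x (k + c)) n w ↔ OccursAt x (n + c) w := by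
  simp only [OccursAt, add_right_comm n]

theorem occursAt_ofFn (x : ℤ → A) (n : ℤ) (N : ℕ) :
    OccursAt x n (List.ofFn fun j : Fin N => x (n + (j : ℕ))) := by
  intro i
  simp

theorem OccursAt.congr (h : OccursAt x n w)
    (hxy : ∀ k, n ≤ k → k < n + w.length → x k = y k) : OccursAt y n w := fun i => by
  rw [← hxy _ (by omega) (by omega), h i]

theorem OccursAt.eq (hx : OccursAt x n w) (hy : OccursAt y n w) {k : ℤ} (hnk : n ≤ k)
    (hk : k < n + w.length) : x k = y k := by
  obtain ⟨j, hj⟩ := Int.eq_ofNat_of_zero_le (sub_nonneg.2 hnk)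
  rw [occursAt_iff] at hx hy
  rw [show k = n + j by omega, hx j (by omega), hy j (by omega)]

theorem OccursAt.splice_left (h : OccursAt x n w) {p : ℤ} (hp : n + w.length ≤ p) :
    OccursAt (splice x y p) n w :=
  h.congr fun k _ hk => (if_pos (by omega)).symm

theorem OccursAt.splice_right (h : OccursAt y n w) {p : ℤ} (hp : p ≤ n) :
    OccursAt (splice x y p) n w :=
  h.congr fun k hk _ => (if_neg (by omega)).symm

end Occurrences

section Language

variable {X : Set (ℤ → A)} {L : Set (List A)} (hL : ∀ w, w ∈ L ↔ ∃ x ∈ X, ∃ n, OccursAt x n w)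
include hL

theorem mem_of_append_mem_left {v w : List A} (h : v ++ w ∈ L) : v ∈ L := by
  obtain ⟨x, hx, n, hocc⟩ := (hL _).1 h
  exact (hL v).2 ⟨x, hx, _, (occursAt_append.1 hocc).1⟩

theorem mem_of_append_mem_right {v w : List A} (h : v ++ w ∈ L) : w ∈ L := by
  obtain ⟨x, hx, n, hocc⟩ := (hL _).1 h
  exact (hL w).2 ⟨x, hx, _, (occursAt_append.1 hocc).2⟩

theorem exists_right_extension {v : List A} (hv : v ∈ L) (N : ℕ) :
    ∃ a : List A, a.length = N ∧ v ++ a ∈ L := by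
  obtain ⟨x, hx, n, hocc⟩ := (hL v).1 hv
  exact ⟨_, List.length_ofFn, (hL _).2 ⟨x, hx, n, occursAt_append.2 ⟨hocc, occursAt_ofFn x _ N⟩⟩⟩

theorem exists_left_extension {w : List A} (hw : w ∈ L) (N : ℕ) :
    ∃ b : List A, b.length = N ∧ b ++ w ∈ L := by
  obtain ⟨x, hx, n, hocc⟩ := (hL w).1 hw
  refine ⟨_, List.length_ofFn, (hL _).2 ⟨x, hx, n - N, occursAt_append.2
    ⟨occursAt_ofFn x _ N, ?_⟩⟩⟩
  simpa using hocc

end Language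

theorem exists_uniform_gluing_of_length_eq [Finite A] {L : Set (List A)}
    (htrans : ∀ v ∈ L, ∀ w ∈ L, ∃ u : List A, v ++ u ++ w ∈ L) (N : ℕ) :
    ∃ τ : ℕ, ∀ a ∈ L, ∀ b ∈ L, a.length = N → b.length = N →
      ∃ u : List A, u.length ≤ τ ∧ a ++ u ++ b ∈ L := by
  set S : Set (List A) := {a | a ∈ L ∧ a.length = N}
  have hS : S.Finite := (List.finite_length_eq A N).subset fun _ ha => ha.2
  have := (hS.prod hS).to_subtype
  choose glue hglue using fun p : ↥(S ×ˢ S) => htrans _ p.2.1.1 _ p.2.2.1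
  obtain ⟨τ, hτ⟩ := Finite.exists_le fun p => (glue p).length
  refine ⟨τ, ?_⟩
  intro a ha b hb haN hbN
  let p : ↥(S ×ˢ S) := ⟨(a, b), ⟨ha, haN⟩, ⟨hb, hbN⟩⟩
  exact ⟨glue p, hτ p, hglue p⟩

section FiniteType

variable {X : Set (ℤ → A)} {F : Finset (List A)}
  (hX : ∀ x, x ∈ X ↔ ∀ w ∈ F, ∀ n, ¬ OccursAt x n w)
include hX

theorem shift_mem {x : ℤ → A} (hx : x ∈ X) (c : ℤ) : (fun k => x (k + c)) ∈ X :=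
  (hX _).2 fun w hw n hocc => (hX x).1 hx w hw (n + c) ((occursAt_shift c).1 hocc)

/-- Every forbidden window of the spliced point lies either to the left of the splice point or
inside the common word and beyond. -/
theorem splice_mem {N : ℕ} (hN : ∀ w ∈ F, w.length ≤ N) {x y : ℤ → A} (hx : x ∈ X) (hy : y ∈ X)
    {n : ℤ} {c : List A} (hcx : OccursAt x n c) (hcy : OccursAt y n c) (hc : N ≤ c.length) :
    splice x y (n + c.length) ∈ X := by
  refine (hX _).2 fun w hw m hocc => ?_
  have hwN := hN w hw
  rcases le_or_gt (m + w.length) (n + c.length) with hleft | hright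
  · exact (hX x).1 hx w hw m (hocc.congr fun k _ hk => if_pos (by omega))
  · refine (hX y).1 hy w hw m (hocc.congr fun k hmk _ => ?_)
    unfold splice
    split_ifs with hk
    · exact hcx.eq hcy (by omega) hk
    · rfl

theorem append_append_mem_of_overlap {L : Set (List A)}
    (hL : ∀ w, w ∈ L ↔ ∃ x ∈ X, ∃ n, OccursAt x n w) {N : ℕ} (hN : ∀ w ∈ F, w.length ≤ N)
    {v c w : List A} (hvc : v ++ c ∈ L) (hcw : c ++ w ∈ L) (hc : N ≤ c.length) :
    v ++ c ++ w ∈ L := by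
  obtain ⟨x, hx, n, hxvc⟩ := (hL _).1 hvc
  obtain ⟨y, hy, m, hycw⟩ := (hL _).1 hcw
  rw [occursAt_append] at hxvc
  have hy'cw : OccursAt (fun k => y (k + (m - (n + v.length)))) (n + v.length) (c ++ w) :=
    (occursAt_shift _).2 (by simpa using hycw)
  rw [occursAt_append] at hy'cw
  refine (hL _).2 ⟨_, splice_mem hX hN hx (shift_mem hX hy _) hxvc.2 hy'cw.1 hc, n, ?_⟩
  refine occursAt_append.2 ⟨occursAt_append.2 ⟨hxvc.1.splice_left ?_, hxvc.2.splice_left le_rfl⟩, ?_⟩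
  · simp
  · rw [List.length_append, Nat.cast_add, ← add_assoc]
    exact hy'cw.2.splice_right le_rfl

end FiniteType

end Subshift

open Subshift in
/-- **Transitivity implies weak specification for a subshift of finite type.**
`Sft` is a subshift of finite type over the finite alphabet `A`, described by the finite
set `F` of forbidden words; `L` is its language.  If the subshift is topologically
transitive (any two words of the language can be glued by some word), then there is a
uniform bound `τ` on the length of the gluing word. -/
theorem stmt_0 {A : Type*} [Fintype A]
    (Sft : Set (ℤ → A)) (F : Finset (List A))
    (hSFT : ∀ x : ℤ → A, x ∈ Sft ↔
      ∀ w ∈ F, ∀ n : ℤ, ¬ (∀ i : Fin w.length, x (n + (i : ℕ)) = w.get i))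
    (L : Set (List A))
    (hL : ∀ w : List A, w ∈ L ↔
      ∃ x ∈ Sft, ∃ n : ℤ, ∀ i : Fin w.length, x (n + (i : ℕ)) = w.get i)
    (htrans : ∀ v ∈ L, ∀ w ∈ L, ∃ u : List A, v ++ u ++ w ∈ L) :
    ∃ τ : ℕ, ∀ v ∈ L, ∀ w ∈ L, ∃ u : List A, u.length ≤ τ ∧ v ++ u ++ w ∈ L := by
  set N := F.sup List.length
  have hN : ∀ w ∈ F, w.length ≤ N := fun w hw => Finset.le_sup hw
  obtain ⟨τ, hτ⟩ := exists_uniform_gluing_of_length_eq htrans N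
  refine ⟨N + τ + N, fun v hv w hw => ?_⟩
  obtain ⟨a, ha, hva⟩ := exists_right_extension hL hv N
  obtain ⟨b, hb, hbw⟩ := exists_left_extension hL hw N
  obtain ⟨u, hu, haub⟩ :=
    hτ a (mem_of_append_mem_right hL hva) b (mem_of_append_mem_left hL hbw) ha hb
  have hvaub : v ++ a ++ (u ++ b) ∈ L :=
    append_append_mem_of_overlap hSFT hL hN hva (by simpa using haub) ha.ge
  have hvaubw : v ++ a ++ u ++ b ++ w ∈ L :=
    append_append_mem_of_overlap hSFT hL hN (by simpa using hvaub) hbw hb.ge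
  refine ⟨a ++ u ++ b, ?_, by simpa using hvaubw⟩
  simp only [List.length_append, ha, hb]
  omega
end

section
/- If a discrete-time dynamical system (X, f) on a compact metric space has the weak specification property, then the suspension flow over (X, f) with constant roof 1, equipped with the Bowen–Walters metric, has the weak specification property. -/
/-!
Write each point of the suspension as `q (x, σ)` with height `σ ∈ [0, 1)`. Shadowing a flow
segment of length `t` starting at height `σ` amounts to shadowing the base segment of
`n = ⌊t⌋ + 3` iterates, because at a fixed height the Bowen–Walters distance is bounded by a
convex combination of the base distances at two consecutive iterates. The discrete gaps are
then corrected by the height differences `σ (j + 1) - σ j` and the rounding errors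
`n j - t j ∈ (2, 3]`, which keeps the flow gaps in `[0, τ + 4]`.
-/

/-- Weak specification property for a discrete-time system `(X, f)`:
for every `δ > 0` there is `τ ∈ ℕ` such that any finite collection of orbit segments
`(x j, n j)`, `j ≤ k`, is `δ`-shadowed by a single orbit with transition gaps `≤ τ`. -/
def MapWeakSpec {X : Type*} [MetricSpace X] (f : X → X) : Prop :=
  ∀ δ > (0:ℝ), ∃ τ : ℕ, ∀ k : ℕ, ∀ x : ℕ → X, ∀ n : ℕ → ℕ,
    ∃ y : X, ∃ gap : ℕ → ℕ, gap 0 = 0 ∧ (∀ i, gap i ≤ τ) ∧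
      ∀ j ≤ k, ∀ i < n j,
        dist (f^[(∑ l ∈ Finset.range (j + 1), gap l) + (∑ l ∈ Finset.range j, n l) + i] y)
          (f^[i] (x j)) < δ

/-- Weak specification property for a flow `φ`: for every `δ > 0` there is `τ > 0` such
that any finite collection of orbit segments `(x j, t j)`, `j ≤ k`, is `δ`-shadowed by a
single orbit with transition times in `[0, τ]`. -/
def FlowWeakSpec {Y : Type*} [MetricSpace Y] (φ : ℝ → Y → Y) : Prop :=
  ∀ δ > (0:ℝ), ∃ τ > (0:ℝ), ∀ k : ℕ, ∀ x : ℕ → Y, ∀ t : ℕ → ℝ, (∀ i, 0 ≤ t i) →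
    ∃ y : Y, ∃ gap : ℕ → ℝ, gap 0 = 0 ∧ (∀ i, gap i ∈ Set.Icc (0:ℝ) τ) ∧
      ∀ j ≤ k, ∀ s ∈ Set.Icc (0:ℝ) (t j),
        dist (φ ((∑ l ∈ Finset.range (j + 1), gap l) + (∑ l ∈ Finset.range j, t l) + s) y)
          (φ s (x j)) < δ

open Finset

section Separation

variable {Y : Type*}

open Classical in
noncomputable def separationDist (S : Set Y) (C : ℝ) (a b : Y) : ℝ :=
  if (a ∈ S ↔ b ∈ S) then 0 else C

variable {S : Set Y} {C : ℝ}

theorem separationDist_self (a : Y) : separationDist S C a a = 0 := by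
  simp [separationDist]

theorem separationDist_comm (a b : Y) : separationDist S C a b = separationDist S C b a := by
  unfold separationDist
  split_ifs <;> tauto

theorem separationDist_triangle (hC : 0 ≤ C) (a b c : Y) :
    separationDist S C a c ≤ separationDist S C a b + separationDist S C b c := by
  unfold separationDist
  split_ifs <;> first | linarith | tauto

theorem separationDist_of_mem {a b : Y} (ha : a ∈ S) (hb : b ∈ S) :
    separationDist S C a b = 0 := by
  simp [separationDist, ha, hb]

end Separation

section Suspension

variable {X Y : Type*} {f : X → X} {q : X × ℝ → Y}

theorem suspension_add_nat (hident : ∀ (x : X) (s : ℝ), q (x, s + 1) = q (f x, s))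
    (m : ℕ) (x : X) (s : ℝ) : q (x, s + m) = q (f^[m] x, s) := by
  induction m generalizing x with
  | zero => simp
  | succ m ih =>
    rw [Nat.cast_succ, ← add_assoc, hident, ih, ← Function.iterate_succ_apply]

theorem suspension_eq_floor_fract (hident : ∀ (x : X) (s : ℝ), q (x, s + 1) = q (f x, s))
    (x : X) {r : ℝ} (hr : 0 ≤ r) : q (x, r) = q (f^[⌊r⌋₊] x, Int.fract r) := by
  rw [← suspension_add_nat hident, Int.fract, ← Int.natCast_floor_eq_floor hr]
  simp

theorem suspension_exists_height_mem_Ico (hident : ∀ (x : X) (s : ℝ), q (x, s + 1) = q (f x, s))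
    (hnonneg : ∀ a : Y, ∃ x : X, ∃ s : ℝ, 0 ≤ s ∧ q (x, s) = a) (a : Y) :
    ∃ x : X, ∃ s ∈ Set.Ico (0:ℝ) 1, q (x, s) = a := by
  obtain ⟨x, s, hs, rfl⟩ := hnonneg a
  exact ⟨f^[⌊s⌋₊] x, Int.fract s, ⟨Int.fract_nonneg s, Int.fract_lt_one s⟩,
    (suspension_eq_floor_fract hident x hs).symm⟩

variable [MetricSpace X] [MetricSpace Y]

/-- The separation pseudometric of the set of points of nonnegative height satisfies both
Bowen–Walters bounds, hence is below `dist`; so this set is not separated from anything. -/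
theorem suspension_exists_nonneg_height [Nonempty X]
    (hmax : ∀ ρ : Y → Y → ℝ,
      (∀ a, ρ a a = 0) → (∀ a b, ρ a b = ρ b a) → (∀ a b c, ρ a c ≤ ρ a b + ρ b c) →
      (∀ x y : X, ∀ s ∈ Set.Icc (0:ℝ) 1,
        ρ (q (x, s)) (q (y, s)) ≤ (1 - s) * dist x y + s * dist (f x) (f y)) →
      (∀ x : X, ∀ s ∈ Set.Icc (0:ℝ) 1, ∀ t ∈ Set.Icc (0:ℝ) 1,
        ρ (q (x, s)) (q (x, t)) ≤ |s - t|) →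
      ∀ a b, ρ a b ≤ dist a b)
    (a : Y) : ∃ x : X, ∃ s : ℝ, 0 ≤ s ∧ q (x, s) = a := by
  set S : Set Y := {b | ∃ x : X, ∃ s : ℝ, 0 ≤ s ∧ q (x, s) = b}
  obtain ⟨x₀⟩ := ‹Nonempty X›
  have hS : ∀ x : X, ∀ s ∈ Set.Icc (0:ℝ) 1, q (x, s) ∈ S := fun x s hs => ⟨x, s, hs.1, rfl⟩
  set C := dist a (q (x₀, 0)) + 1
  have hC : 0 ≤ C := by positivity
  have hle := hmax (separationDist S C) separationDist_self separationDist_comm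
    (separationDist_triangle hC)
    (fun x y s hs => by
      rw [separationDist_of_mem (hS x s hs) (hS y s hs)]
      have : 0 ≤ 1 - s := sub_nonneg.2 hs.2
      exact add_nonneg (mul_nonneg this dist_nonneg) (mul_nonneg hs.1 dist_nonneg))
    (fun x s hs t ht => by
      rw [separationDist_of_mem (hS x s hs) (hS x t ht)]
      positivity)
    a (q (x₀, 0))
  by_contra ha
  have hsep : separationDist S C a (q (x₀, 0)) = C := by
    simp [separationDist, S, ha, hS x₀ 0 (by simp)]
  linarith

theorem suspension_dist_lt (hH : ∀ x y : X, ∀ s ∈ Set.Icc (0:ℝ) 1,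
      dist (q (x, s)) (q (y, s)) ≤ (1 - s) * dist x y + s * dist (f x) (f y))
    {x y : X} {s δ : ℝ} (hs : s ∈ Set.Icc (0:ℝ) 1)
    (h₀ : dist x y < δ) (h₁ : dist (f x) (f y) < δ) : dist (q (x, s)) (q (y, s)) < δ := by
  have : 0 ≤ 1 - s := sub_nonneg.2 hs.2
  calc dist (q (x, s)) (q (y, s)) ≤ (1 - s) * dist x y + s * dist (f x) (f y) := hH x y s hs
    _ ≤ (1 - s) * max (dist x y) (dist (f x) (f y)) + s * max (dist x y) (dist (f x) (f y)) := by
      gcongr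
      exacts [le_max_left _ _, hs.1, le_max_right _ _]
    _ = max (dist x y) (dist (f x) (f y)) := by ring
    _ < δ := max_lt h₀ h₁

theorem suspension_dist_lt_of_iterate
    (hident : ∀ (x : X) (s : ℝ), q (x, s + 1) = q (f x, s))
    (hH : ∀ x y : X, ∀ s ∈ Set.Icc (0:ℝ) 1,
      dist (q (x, s)) (q (y, s)) ≤ (1 - s) * dist x y + s * dist (f x) (f y))
    {z ξ : X} {N n : ℕ} {δ r : ℝ} (hz : ∀ i < n, dist (f^[N + i] z) (f^[i] ξ) < δ)
    (hr : 0 ≤ r) (hrn : r + 1 < n) : dist (q (z, N + r)) (q (ξ, r)) < δ := by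
  set p := ⌊r⌋₊
  have hpn : p + 1 < n := by
    have : (p : ℝ) + 1 < n := by linarith [Nat.floor_le hr]
    exact_mod_cast this
  rw [add_comm, suspension_add_nat hident, suspension_eq_floor_fract hident _ hr,
    suspension_eq_floor_fract hident ξ hr, ← Function.iterate_add_apply, add_comm]
  refine suspension_dist_lt hH ⟨Int.fract_nonneg r, (Int.fract_lt_one r).le⟩
    (hz p (by omega)) ?_
  have := hz (p + 1) hpn
  rwa [← add_assoc, Function.iterate_succ_apply', Function.iterate_succ_apply'] at this

end Suspension

section Gaps

def flowGap (m n : ℕ → ℕ) (t σ : ℕ → ℝ) : ℕ → ℝ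
  | 0 => 0
  | j + 1 => m (j + 1) + ((n j : ℝ) - t j) + (σ (j + 1) - σ j)

variable {m n : ℕ → ℕ} {t σ : ℕ → ℝ}

theorem add_sum_flowGap_add_sum (hm : m 0 = 0) (j : ℕ) :
    σ 0 + ((∑ l ∈ range (j + 1), flowGap m n t σ l) + ∑ l ∈ range j, t l)
      = (((∑ l ∈ range (j + 1), m l) + ∑ l ∈ range j, n l : ℕ) : ℝ) + σ j := by
  induction j with
  | zero => simp [flowGap, hm]
  | succ j ih =>
    rw [sum_range_succ (f := flowGap m n t σ), sum_range_succ (f := t), sum_range_succ (f := m),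
      sum_range_succ (f := n)]
    have hgap : flowGap m n t σ (j + 1) = m (j + 1) + ((n j : ℝ) - t j) + (σ (j + 1) - σ j) :=
      rfl
    push_cast at ih ⊢
    linarith

theorem flowGap_mem_Icc {τ : ℕ} (hmτ : ∀ i, m i ≤ τ) (ht : ∀ i, 0 ≤ t i)
    (hn : ∀ i, n i = ⌊t i⌋₊ + 3) (hσ : ∀ i, σ i ∈ Set.Ico (0:ℝ) 1) (j : ℕ) :
    flowGap m n t σ j ∈ Set.Icc (0:ℝ) (τ + 4) := by
  cases j with
  | zero => exact ⟨le_rfl, by positivity⟩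
  | succ j =>
    have hm : (m (j + 1) : ℝ) ≤ τ := by exact_mod_cast hmτ (j + 1)
    have hnj : (n j : ℝ) = ⌊t j⌋₊ + 3 := by simp [hn]
    have := Nat.floor_le (ht j)
    have := Nat.lt_floor_add_one (t j)
    obtain ⟨hσj₀, hσj₁⟩ := hσ j
    obtain ⟨hσj'₀, hσj'₁⟩ := hσ (j + 1)
    simp only [flowGap, Set.mem_Icc, hnj]
    constructor <;> linarith [(m (j + 1)).cast_nonneg (α := ℝ)]

end Gaps

/-- `Y` is the suspension `(X × [0,1]) / (x,1) ∼ (f x, 0)`, presented by the identification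
map `q`; its Bowen–Walters metric is characterized by `hmax` as the largest pseudometric
below the horizontal and vertical bounds. -/
theorem stmt_1_general {X Y : Type*} [MetricSpace X] [MetricSpace Y]
    (f : X → X) (hspec : MapWeakSpec f)
    (q : X × ℝ → Y) (hqsurj : Function.Surjective q)
    (hident : ∀ (x : X) (s : ℝ), q (x, s + 1) = q (f x, s))
    (φ : ℝ → Y → Y) (hφ : ∀ (t : ℝ) (x : X) (s : ℝ), φ t (q (x, s)) = q (x, s + t))
    (hH : ∀ x y : X, ∀ s ∈ Set.Icc (0:ℝ) 1,
      dist (q (x, s)) (q (y, s)) ≤ (1 - s) * dist x y + s * dist (f x) (f y))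
    (hmax : ∀ ρ : Y → Y → ℝ,
      (∀ a, ρ a a = 0) → (∀ a b, ρ a b = ρ b a) → (∀ a b c, ρ a c ≤ ρ a b + ρ b c) →
      (∀ x y : X, ∀ s ∈ Set.Icc (0:ℝ) 1,
        ρ (q (x, s)) (q (y, s)) ≤ (1 - s) * dist x y + s * dist (f x) (f y)) →
      (∀ x : X, ∀ s ∈ Set.Icc (0:ℝ) 1, ∀ t ∈ Set.Icc (0:ℝ) 1,
        ρ (q (x, s)) (q (x, t)) ≤ |s - t|) →
      ∀ a b, ρ a b ≤ dist a b) :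
    FlowWeakSpec φ := by
  intro δ hδ
  obtain ⟨τ, hτ⟩ := hspec δ hδ
  refine ⟨τ + 4, by positivity, fun k x t ht => ?_⟩
  have : Nonempty X := ⟨(hqsurj (x 0)).choose.1⟩
  choose ξ σ hσ hξ using fun j => suspension_exists_height_mem_Ico hident
    (suspension_exists_nonneg_height hmax) (x j)
  obtain ⟨z, m, hm₀, hmτ, hz⟩ := hτ k ξ (fun j => ⌊t j⌋₊ + 3)
  refine ⟨q (z, σ 0), flowGap m _ t σ, rfl, flowGap_mem_Icc hmτ ht (fun _ => rfl) hσ,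
    fun j hj s hs => ?_⟩
  rw [← hξ j, hφ, hφ, ← add_assoc, add_sum_flowGap_add_sum hm₀, add_assoc]
  refine suspension_dist_lt_of_iterate hident hH (hz j hj) (by linarith [(hσ j).1, hs.1]) ?_
  have := Nat.lt_floor_add_one (t j)
  push_cast
  linarith [(hσ j).2, hs.2]

/-- **Weak specification lifts from a map to its suspension flow with constant roof 1.**
`Y` is the suspension `(X × [0,1]) / (x,1) ∼ (f x, 0)`, presented by the identification
map `q : X × ℝ → Y` satisfying `q (x, s + 1) = q (f x, s)`, with suspension flow
`φ t (q (x, s)) = q (x, s + t)`.  The metric on `Y` is the Bowen–Walters metric,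
characterized as the largest (pseudo)metric bounded by the horizontal distance
`(1 - s) d(x, y) + s d(f x, f y)` and the vertical distance `|s - t|`. -/
theorem stmt_1 {X Y : Type*} [MetricSpace X] [CompactSpace X] [MetricSpace Y]
    (f : X → X) (hf : Continuous f) (hspec : MapWeakSpec f)
    (q : X × ℝ → Y) (hqsurj : Function.Surjective q)
    (hident : ∀ (x : X) (s : ℝ), q (x, s + 1) = q (f x, s))
    (φ : ℝ → Y → Y) (hφ : ∀ (t : ℝ) (x : X) (s : ℝ), φ t (q (x, s)) = q (x, s + t))
    (hH : ∀ x y : X, ∀ s ∈ Set.Icc (0:ℝ) 1,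
      dist (q (x, s)) (q (y, s)) ≤ (1 - s) * dist x y + s * dist (f x) (f y))
    (hV : ∀ x : X, ∀ s ∈ Set.Icc (0:ℝ) 1, ∀ t ∈ Set.Icc (0:ℝ) 1,
      dist (q (x, s)) (q (x, t)) ≤ |s - t|)
    (hmax : ∀ ρ : Y → Y → ℝ,
      (∀ a, ρ a a = 0) → (∀ a b, ρ a b = ρ b a) → (∀ a b c, ρ a c ≤ ρ a b + ρ b c) →
      (∀ x y : X, ∀ s ∈ Set.Icc (0:ℝ) 1,
        ρ (q (x, s)) (q (y, s)) ≤ (1 - s) * dist x y + s * dist (f x) (f y)) →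
      (∀ x : X, ∀ s ∈ Set.Icc (0:ℝ) 1, ∀ t ∈ Set.Icc (0:ℝ) 1,
        ρ (q (x, s)) (q (x, t)) ≤ |s - t|) →
      ∀ a b, ρ a b ≤ dist a b) :
    FlowWeakSpec φ :=
  stmt_1_general f hspec q hqsurj hident φ hφ hH hmax
end

section
/- Let φ be a continuous function on a compact metric space X with flow F, let m be an invariant measure satisfying the lower Gibbs bound m(B_t(x,η)) ≥ Q^{-1} e^{−tP + ∫₀^t φ(f_s x) ds} for some P ∈ ℝ, Q > 1, η > 0. Suppose E_t is a family of sets with #E_t ≥ e^{t(h−ε')} and such that for every x ∈ E_t: (i) the Bowen balls B_t(x,η) are pairwise disjoint, and (ii) ∫₀^t φ(f_s x) ds ≥ t(∫φ dμ − δ) and |(1/t)∫₀^t ψ(f_s y) ds − ∫ψ dμ| ≤ δ for all y ∈ B_t(x,η). Then m{x : |(1/t)∫₀^t ψ(f_s x) ds − ∫ψ dμ| ≤ δ} ≥ Q^{-1} e^{−t(P − h − ∫φ dμ + ε' + δ)}. -/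
/-!
The Bowen balls `B_t(x, η)`, `x ∈ E`, are pairwise disjoint and all lie in the deviation set, so
its measure is at least the sum of their measures. By the Gibbs bound and the lower bound on the
Birkhoff integrals of `φ` along `E`, each ball has measure at least
`Q⁻¹ e^{-tP + t(∫φ dμ - δ)}`, and there are at least `e^{t(h - ε')}` of them.
-/

open MeasureTheory Set

theorem IsCompact.isOpen_setOf_forall_mem_prod {X Y : Type*} [TopologicalSpace X]
    [TopologicalSpace Y] {K : Set Y} (hK : IsCompact K) {U : Set (X × Y)} (hU : IsOpen U) :
    IsOpen {x : X | ∀ y ∈ K, (x, y) ∈ U} := by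
  refine isOpen_iff_eventually.2 fun x hx => ?_
  exact hK.eventually_forall_of_forall_eventually fun y hy => hU.mem_nhds (hx y hy)

def bowenBall {X : Type*} [PseudoMetricSpace X] (f : ℝ → X → X) (t η : ℝ) (x : X) : Set X :=
  {z : X | ∀ s ∈ Icc (0 : ℝ) t, dist (f s x) (f s z) < η}

theorem isOpen_bowenBall {X : Type*} [PseudoMetricSpace X] {f : ℝ → X → X}
    (hf : Continuous fun p : ℝ × X => f p.1 p.2) (t η : ℝ) (x : X) :
    IsOpen (bowenBall f t η x) := by
  refine isCompact_Icc.isOpen_setOf_forall_mem_prod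
    (U := {p : X × ℝ | dist (f p.2 x) (f p.2 p.1) < η}) ?_
  exact isOpen_lt ((hf.comp (continuous_snd.prodMk continuous_const)).dist
    (hf.comp continuous_swap)) continuous_const

theorem card_mul_le_toReal_measure_of_pairwiseDisjoint {ι α : Type*} [MeasurableSpace α]
    {μ : Measure α} [IsFiniteMeasure μ] {E : Finset ι} {B : ι → Set α} {D : Set α} {c : ℝ}
    (hmeas : ∀ i ∈ E, MeasurableSet (B i)) (hdisj : (E : Set ι).PairwiseDisjoint B)
    (hsub : ∀ i ∈ E, B i ⊆ D) (hc : ∀ i ∈ E, c ≤ (μ (B i)).toReal) :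
    E.card * c ≤ (μ D).toReal :=
  calc E.card * c
      ≤ ∑ i ∈ E, (μ (B i)).toReal := by
        simpa only [Finset.sum_const, nsmul_eq_mul] using Finset.sum_le_sum hc
    _ = (μ (⋃ i ∈ E, B i)).toReal := by
        rw [measure_biUnion_finset hdisj hmeas, ENNReal.toReal_sum fun i _ => measure_ne_top μ _]
    _ ≤ (μ D).toReal :=
        ENNReal.toReal_mono (measure_ne_top μ _) (measure_mono (iUnion₂_subset hsub))

theorem stmt_16_general {X : Type*} [MetricSpace X]
    [MeasurableSpace X] [BorelSpace X]
    (f : ℝ → X → X) (hf : Continuous fun p : ℝ × X => f p.1 p.2)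
    (φ ψ : X → ℝ)
    (m μ : Measure X) [IsProbabilityMeasure m]
    (P Q η h ε' δ t : ℝ) (hQ : 1 < Q)
    (hGibbs : ∀ x : X,
      Q⁻¹ * Real.exp (-(t * P) + ∫ s in (0:ℝ)..t, φ (f s x)) ≤
        (m {y : X | ∀ s ∈ Set.Icc (0:ℝ) t, dist (f s x) (f s y) < η}).toReal)
    (E : Finset X)
    (hcard : Real.exp (t * (h - ε')) ≤ (E.card : ℝ))
    (hdisj : ∀ x ∈ E, ∀ y ∈ E, x ≠ y →
      Disjoint {z : X | ∀ s ∈ Set.Icc (0:ℝ) t, dist (f s x) (f s z) < η}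
        {z : X | ∀ s ∈ Set.Icc (0:ℝ) t, dist (f s y) (f s z) < η})
    (hφE : ∀ x ∈ E, t * ((∫ y, φ y ∂μ) - δ) ≤ ∫ s in (0:ℝ)..t, φ (f s x))
    (hψE : ∀ x ∈ E, ∀ y ∈ {z : X | ∀ s ∈ Set.Icc (0:ℝ) t, dist (f s x) (f s z) < η},
      |(1 / t) * (∫ s in (0:ℝ)..t, ψ (f s y)) - ∫ z, ψ z ∂μ| ≤ δ) :
    Q⁻¹ * Real.exp (-(t * (P - h - (∫ y, φ y ∂μ) + ε' + δ))) ≤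
      (m {x : X | |(1 / t) * (∫ s in (0:ℝ)..t, ψ (f s x)) - ∫ z, ψ z ∂μ| ≤ δ}).toReal := by
  set c := Q⁻¹ * Real.exp (-(t * P) + t * ((∫ y, φ y ∂μ) - δ))
  have hQ_inv : 0 ≤ Q⁻¹ := inv_nonneg.2 (zero_le_one.trans hQ.le)
  have hball : ∀ x ∈ E, c ≤ (m (bowenBall f t η x)).toReal := fun x hx =>
    (mul_le_mul_of_nonneg_left (Real.exp_le_exp.2 (by linarith [hφE x hx])) hQ_inv).trans
      (hGibbs x)
  have hsplit : Q⁻¹ * Real.exp (-(t * (P - h - (∫ y, φ y ∂μ) + ε' + δ))) =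
      Real.exp (t * (h - ε')) * c := by
    rw [show -(t * (P - h - (∫ y, φ y ∂μ) + ε' + δ)) =
        t * (h - ε') + (-(t * P) + t * ((∫ y, φ y ∂μ) - δ)) by ring, Real.exp_add]
    ring
  calc Q⁻¹ * Real.exp (-(t * (P - h - (∫ y, φ y ∂μ) + ε' + δ)))
      = Real.exp (t * (h - ε')) * c := hsplit
    _ ≤ E.card * c := mul_le_mul_of_nonneg_right hcard (by positivity)
    _ ≤ _ := card_mul_le_toReal_measure_of_pairwiseDisjoint
        (fun x _ => (isOpen_bowenBall hf t η x).measurableSet) hdisj hψE hball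

/-- **Key lower estimate in the lower large deviations bound.**
`m` satisfies the lower Gibbs bound with constants `P, Q, η` for the potential `φ`;
`E` is a set of cardinality at least `e^{t(h-ε')}` whose Bowen `(t,η)`-balls are
pairwise disjoint, on which the Birkhoff integrals of `φ` are at least
`t(∫φ dμ − δ)`, and whose Bowen balls consist of points whose Birkhoff averages of `ψ`
are `δ`-close to `∫ψ dμ`.  Then the `m`-measure of the set of points whose Birkhoff
average of `ψ` is `δ`-close to `∫ψ dμ` is at least
`Q⁻¹ e^{−t(P − h − ∫φ dμ + ε' + δ)}`. -/
theorem stmt_16 {X : Type*} [MetricSpace X] [CompactSpace X]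
    [MeasurableSpace X] [BorelSpace X]
    (f : ℝ → X → X) (hf : Continuous fun p : ℝ × X => f p.1 p.2)
    (hf0 : ∀ x, f 0 x = x) (hfadd : ∀ s t x, f (s + t) x = f s (f t x))
    (φ ψ : X → ℝ) (hφc : Continuous φ) (hψc : Continuous ψ)
    (m μ : Measure X) [IsProbabilityMeasure m] [IsProbabilityMeasure μ]
    (P Q η h ε' δ t : ℝ) (hQ : 1 < Q) (hη : 0 < η) (ht : 0 < t) (hδ : 0 < δ)
    (hGibbs : ∀ x : X,
      Q⁻¹ * Real.exp (-(t * P) + ∫ s in (0:ℝ)..t, φ (f s x)) ≤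
        (m {y : X | ∀ s ∈ Set.Icc (0:ℝ) t, dist (f s x) (f s y) < η}).toReal)
    (E : Finset X)
    (hcard : Real.exp (t * (h - ε')) ≤ (E.card : ℝ))
    (hdisj : ∀ x ∈ E, ∀ y ∈ E, x ≠ y →
      Disjoint {z : X | ∀ s ∈ Set.Icc (0:ℝ) t, dist (f s x) (f s z) < η}
        {z : X | ∀ s ∈ Set.Icc (0:ℝ) t, dist (f s y) (f s z) < η})
    (hφE : ∀ x ∈ E, t * ((∫ y, φ y ∂μ) - δ) ≤ ∫ s in (0:ℝ)..t, φ (f s x))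
    (hψE : ∀ x ∈ E, ∀ y ∈ {z : X | ∀ s ∈ Set.Icc (0:ℝ) t, dist (f s x) (f s z) < η},
      |(1 / t) * (∫ s in (0:ℝ)..t, ψ (f s y)) - ∫ z, ψ z ∂μ| ≤ δ) :
    Q⁻¹ * Real.exp (-(t * (P - h - (∫ y, φ y ∂μ) + ε' + δ))) ≤
      (m {x : X | |(1 / t) * (∫ s in (0:ℝ)..t, ψ (f s x)) - ∫ z, ψ z ∂μ| ≤ δ}).toReal :=
  stmt_16_general f hf φ ψ m μ P Q η h ε' δ t hQ hGibbs E hcard hdisj hφE hψE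
end

section
/- Let (Σ, σ) be a topologically transitive subshift of finite type and Susp(Σ,σ) its suspension with constant roof 1. Then the suspension flow satisfies the weak periodic orbit closing property: for all δ > 0 there exists R > 0 such that for every point y and time t there is a periodic point y' of the flow with period at most t + R and d_t(y, y') < δ, where d_t is the Bowen metric for the suspension flow in the Bowen–Walters metric. -/
/-!
Let `W` bound the lengths of the forbidden words, so that membership in the shift space is
decided by windows of length `W`. By transitivity every `W`-block can be followed by every
other `W`-block after some gap, and as there are finitely many pairs of blocks the gap is
bounded by a uniform `C`. Hence the block of a point `x` on `[0, l)` (with `l ≥ W`) closes up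
to a point of period at most `l + C` that agrees with `x` on `[0, l)`: every window of the
periodic sequence is a window of `x` or of the connecting point.

On the suspension, two base points agreeing on `[⌊s⌋ - N, ⌊s⌋ + N + 1]` are at Bowen–Walters
distance at most `2⁻ᴺ` at height `s`, because the horizontal bound interpolates between `dS`
at `x` and at `S x`. Taking `l ≈ t + 2N + W` gives the closing property with
`R = C + 2N + W + 3`.
-/

section Subshift

variable {A : Type*}

def IsSFT (F : Finset (List A)) (X : Set (ℤ → A)) : Prop :=
  ∀ x : ℤ → A, x ∈ X ↔ ∀ w ∈ F, ∀ n : ℤ, ¬ (∀ i : Fin w.length, x (n + (i : ℕ)) = w.get i)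

variable {F : Finset (List A)} {X : Set (ℤ → A)}

namespace IsSFT

theorem mem_of_forall_window (hX : IsSFT F X) {W : ℕ} (hW : ∀ w ∈ F, w.length ≤ W)
    {y : ℤ → A} (hy : ∀ n : ℤ, ∃ x ∈ X, ∃ m : ℤ, ∀ i : ℕ, i < W → y (n + i) = x (m + i)) :
    y ∈ X := by
  refine (hX y).2 fun w hw n hmatch => ?_
  obtain ⟨x, hx, m, hxy⟩ := hy n
  refine (hX x).1 hx w hw m fun i => ?_
  rw [← hxy i (i.isLt.trans_le (hW w hw))]
  exact hmatch i

theorem shift_mem (hX : IsSFT F X) {x : ℤ → A} (hx : x ∈ X) (k : ℤ) :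
    (fun i => x (i + k)) ∈ X :=
  hX.mem_of_forall_window (fun _ hw => Finset.le_sup hw) fun n =>
    ⟨x, hx, n + k, fun i _ => by rw [add_right_comm]⟩

def shiftBy (hX : IsSFT F X) (k : ℤ) (x : X) : X :=
  ⟨fun i => (x : ℤ → A) (i + k), hX.shift_mem x.2 k⟩

@[simp]
theorem shiftBy_apply (hX : IsSFT F X) (k : ℤ) (x : X) (i : ℤ) :
    (hX.shiftBy k x : ℤ → A) i = (x : ℤ → A) (i + k) :=
  rfl

@[simp]
theorem shiftBy_zero (hX : IsSFT F X) (x : X) : hX.shiftBy 0 x = x :=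
  Subtype.ext <| funext fun i => by rw [shiftBy_apply, add_zero]

theorem shiftBy_shiftBy (hX : IsSFT F X) (j k : ℤ) (x : X) :
    hX.shiftBy j (hX.shiftBy k x) = hX.shiftBy (j + k) x :=
  Subtype.ext <| funext fun i => by simp only [shiftBy_apply, add_assoc]

theorem apply_eq_shiftBy (hX : IsSFT F X) {S : X → X}
    (hS : ∀ (x : X) (n : ℤ), (S x : ℤ → A) n = (x : ℤ → A) (n + 1)) (x : X) :
    S x = hX.shiftBy 1 x :=
  Subtype.ext <| funext (hS x)

theorem iterate_eq_shiftBy (hX : IsSFT F X) {S : X → X}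
    (hS : ∀ (x : X) (n : ℤ), (S x : ℤ → A) n = (x : ℤ → A) (n + 1)) (n : ℕ) (x : X) :
    S^[n] x = hX.shiftBy n x := by
  induction n with
  | zero => exact (hX.shiftBy_zero x).symm
  | succ n ih =>
    rw [Function.iterate_succ_apply', ih, hX.apply_eq_shiftBy hS, shiftBy_shiftBy]
    push_cast
    rw [add_comm]

end IsSFT

def periodicGlue (p l : ℤ) (u v : ℤ → A) (i : ℤ) : A :=
  if i % p < l then u (i % p) else v (i % p)

section periodicGlue

variable {p l : ℤ} {u v : ℤ → A}

theorem periodicGlue_add_mul (i k : ℤ) :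
    periodicGlue p l u v (i + p * k) = periodicGlue p l u v i := by
  simp only [periodicGlue, Int.add_mul_emod_self_left]

theorem periodicGlue_of_lt (hlp : l ≤ p) {i : ℤ} (hi₀ : 0 ≤ i) (hil : i < l) :
    periodicGlue p l u v i = u i := by
  rw [periodicGlue, Int.emod_eq_of_lt hi₀ (by omega), if_pos hil]

theorem periodicGlue_eq_right (hlp : l ≤ p) {d : ℤ} (hdl : d ≤ l)
    (huv : ∀ i, l - d ≤ i → i < l → u i = v i) (hvu : ∀ i, 0 ≤ i → i < d → v (p + i) = u i)
    {i : ℤ} (hi₀ : l - d ≤ i) (hi₁ : i < p + d) : periodicGlue p l u v i = v i := by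
  rcases lt_or_ge i l with hil | hli
  · rw [periodicGlue_of_lt hlp (by omega) hil, huv i hi₀ hil]
  rcases lt_or_ge i p with hip | hpi
  · rw [periodicGlue, Int.emod_eq_of_lt (by omega) hip, if_neg (by omega)]
  · have hi : i = (i - p) + p * 1 := by ring
    rw [hi, periodicGlue_add_mul, periodicGlue_of_lt hlp (by omega) (by omega),
      ← hvu _ (by omega) (by omega)]
    congr 1
    ring

end periodicGlue

theorem IsSFT.periodicGlue_mem (hX : IsSFT F X) {W : ℕ} (hW : ∀ w ∈ F, w.length ≤ W)
    {p l : ℤ} {u v : ℤ → A} (hp : 0 < p) (hlp : l ≤ p) (hWl : W ≤ l) (hu : u ∈ X) (hv : v ∈ X)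
    (huv : ∀ i : ℤ, l - W ≤ i → i < l → u i = v i)
    (hvu : ∀ i : ℤ, 0 ≤ i → i < W → v (p + i) = u i) :
    periodicGlue p l u v ∈ X := by
  refine hX.mem_of_forall_window hW fun n => ?_
  have hr₀ : 0 ≤ n % p := Int.emod_nonneg _ hp.ne'
  have hr₁ : n % p < p := Int.emod_lt_of_pos _ hp
  have hn (i : ℕ) : periodicGlue p l u v (n + i) = periodicGlue p l u v (n % p + i) := by
    conv_lhs => rw [← Int.emod_add_mul_ediv n p, add_right_comm, periodicGlue_add_mul]
  by_cases hleft : n % p + W ≤ l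
  · exact ⟨u, hu, n % p, fun i hi => by rw [hn, periodicGlue_of_lt hlp (by omega) (by omega)]⟩
  · exact ⟨v, hv, n % p, fun i hi => by
      rw [hn, periodicGlue_eq_right hlp hWl huv hvu (by omega) (by omega)]⟩

theorem exists_bound_of_finite {β : Type*} [Finite β] (P : β → ℕ → Prop) :
    ∃ C : ℕ, ∀ b, (∃ n, P b n) → ∃ n ≤ C, P b n := by
  classical
  let g (b : β) : ℕ := if h : ∃ n, P b n then Nat.find h else 0
  obtain ⟨C, hC⟩ := (Set.finite_range g).bddAbove
  refine ⟨C, fun b hb => ⟨g b, hC ⟨b, rfl⟩, ?_⟩⟩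
  simpa only [g, dif_pos hb] using Nat.find_spec hb

theorem isOpen_setOf_window_eq [TopologicalSpace A] [DiscreteTopology A] (X : Set (ℤ → A))
    (c : ℤ) (W : ℕ) (y : ℤ → A) :
    IsOpen {z : X | ∀ i : ℤ, 0 ≤ i → i < W → (z : ℤ → A) (c + i) = y i} := by
  have h : {z : X | ∀ i : ℤ, 0 ≤ i → i < W → (z : ℤ → A) (c + i) = y i} =
      ⋂ i ∈ Set.Ico (0 : ℤ) W, {z : X | (z : ℤ → A) (c + i) = y i} := by
    ext z
    simp [and_imp]
  rw [h]
  refine (Set.finite_Ico _ _).isOpen_biInter fun i _ => ?_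
  have hcont : Continuous fun z : X => (z : ℤ → A) (c + i) :=
    (continuous_apply (c + i)).comp continuous_subtype_val
  exact (isOpen_discrete {y i}).preimage hcont

def IsConnector (W n : ℕ) (x y z : ℤ → A) : Prop :=
  ∀ i : ℤ, 0 ≤ i → i < W → z i = x i ∧ z (W + n + i) = y i

section Transitive

variable [TopologicalSpace A] [DiscreteTopology A] {S : X → X}

theorem IsSFT.exists_isConnector (hX : IsSFT F X)
    (hS : ∀ (x : X) (n : ℤ), (S x : ℤ → A) n = (x : ℤ → A) (n + 1))
    (htrans : ∀ U V : Set X, IsOpen U → IsOpen V → U.Nonempty → V.Nonempty →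
      ∃ n : ℕ, ((S^[n] '' U) ∩ V).Nonempty) (W : ℕ) (x y : X) :
    ∃ (n : ℕ) (z : X), IsConnector W n (x : ℤ → A) y z := by
  obtain ⟨n, _, ⟨z, hzx, rfl⟩, hzy⟩ := htrans _ _
    (isOpen_setOf_window_eq X 0 W x) (isOpen_setOf_window_eq X W W y)
    ⟨x, fun i _ _ => by rw [zero_add]⟩
    ⟨hX.shiftBy (-W) y, fun i _ _ => by rw [IsSFT.shiftBy_apply, add_neg_cancel_comm]⟩
  refine ⟨n, z, fun i h₀ h₁ => ⟨by simpa only [zero_add] using hzx i h₀ h₁, ?_⟩⟩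
  rw [← hzy i h₀ h₁, hX.iterate_eq_shiftBy hS, IsSFT.shiftBy_apply, add_right_comm]

theorem IsSFT.exists_isConnector_le [Finite A] (hX : IsSFT F X)
    (hS : ∀ (x : X) (n : ℤ), (S x : ℤ → A) n = (x : ℤ → A) (n + 1))
    (htrans : ∀ U V : Set X, IsOpen U → IsOpen V → U.Nonempty → V.Nonempty →
      ∃ n : ℕ, ((S^[n] '' U) ∩ V).Nonempty) (W : ℕ) :
    ∃ C : ℕ, ∀ x y : X, ∃ n ≤ C, ∃ z : X, IsConnector W n (x : ℤ → A) y z := by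
  obtain ⟨C, hC⟩ := exists_bound_of_finite
    fun (uv : (Set.Ico (0 : ℤ) W → A) × (Set.Ico (0 : ℤ) W → A)) (n : ℕ) =>
      ∃ z : X, ∀ i : Set.Ico (0 : ℤ) W,
        (z : ℤ → A) i = uv.1 i ∧ (z : ℤ → A) (W + n + i) = uv.2 i
  refine ⟨C, fun x y => ?_⟩
  obtain ⟨n, hnC, z, hz⟩ := hC (fun i => (x : ℤ → A) i, fun i => (y : ℤ → A) i) <| by
    obtain ⟨n, z, hz⟩ := hX.exists_isConnector hS htrans W x y
    exact ⟨n, z, fun i => hz i i.2.1 i.2.2⟩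
  exact ⟨n, hnC, z, fun i h₀ h₁ => hz ⟨i, h₀, h₁⟩⟩

end Transitive

theorem IsSFT.exists_periodic_eqOn (hX : IsSFT F X) {W C : ℕ} (hW : ∀ w ∈ F, w.length ≤ W)
    (hC : ∀ x y : X, ∃ n ≤ C, ∃ z : X, IsConnector W n (x : ℤ → A) y z) (x : X) {l : ℕ}
    (hWl : W ≤ l) (hl : 0 < l) :
    ∃ (z : X) (p : ℕ), 0 < p ∧ p ≤ l + C ∧ hX.shiftBy p z = z ∧
      ∀ i : ℤ, 0 ≤ i → i < l → (z : ℤ → A) i = (x : ℤ → A) i := by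
  -- connect the last `W`-block of `x` on `[0, l)` back to its first one
  obtain ⟨n, hnC, c, hc⟩ := hC (hX.shiftBy (l - W) x) x
  have hglue : periodicGlue (l + n) l x (hX.shiftBy (W - l) c) ∈ X := by
    refine hX.periodicGlue_mem hW (by omega) (by omega) (by omega) x.2 (Subtype.property _)
      (fun i h₀ h₁ => ?_) (fun i h₀ h₁ => ?_)
    · have := (hc (i - (l - W)) (by omega) (by omega)).1
      rw [IsSFT.shiftBy_apply, sub_add_cancel] at this
      rw [IsSFT.shiftBy_apply, ← this, sub_eq_add_neg, neg_sub]
    · rw [IsSFT.shiftBy_apply, ← (hc i h₀ h₁).2]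
      ring_nf
  refine ⟨⟨_, hglue⟩, l + n, by omega, by omega, Subtype.ext <| funext fun i => ?_,
    fun i h₀ h₁ => periodicGlue_of_lt (by omega) h₀ h₁⟩
  simpa using periodicGlue_add_mul i 1

theorem le_half_pow_of_eqOn {dS : X → X → ℝ} (hdS0 : ∀ x : X, dS x x = 0)
    (hdS : ∀ x y : X, x ≠ y → dS x y =
      (1 / 2 : ℝ) ^ sInf {n : ℕ | ∃ i : ℤ, i.natAbs = n ∧ (x : ℤ → A) i ≠ (y : ℤ → A) i})
    {N : ℕ} {x y : X} (h : ∀ i : ℤ, i.natAbs ≤ N → (x : ℤ → A) i = (y : ℤ → A) i) :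
    dS x y ≤ (1 / 2 : ℝ) ^ N := by
  rcases eq_or_ne x y with rfl | hxy
  · rw [hdS0]
    positivity
  obtain ⟨i, hi⟩ := Function.ne_iff.1 (Subtype.coe_injective.ne hxy)
  rw [hdS x y hxy]
  refine pow_le_pow_of_le_one (by norm_num) (by norm_num) (le_csInf ⟨_, i, rfl, hi⟩ ?_)
  rintro _ ⟨j, rfl, hj⟩
  by_contra! hjN
  exact hj (h j hjN.le)

end Subshift

section Suspension

variable {A : Type*} {F : Finset (List A)} {X : Set (ℤ → A)} {S : X → X} {Y : Type*}
  {q : X × ℝ → Y}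

theorem IsSFT.suspension_shiftBy (hX : IsSFT F X)
    (hS : ∀ (x : X) (n : ℤ), (S x : ℤ → A) n = (x : ℤ → A) (n + 1))
    (hident : ∀ (x : X) (s : ℝ), q (x, s + 1) = q (S x, s)) (k : ℤ) (x : X) (s : ℝ) :
    q (hX.shiftBy k x, s) = q (x, s + k) := by
  have hstep (k : ℤ) (s : ℝ) : q (hX.shiftBy (k + 1) x, s) = q (hX.shiftBy k x, s + 1) := by
    rw [hident, hX.apply_eq_shiftBy hS, IsSFT.shiftBy_shiftBy, add_comm 1 k]
  induction k using Int.induction_on generalizing s with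
  | zero => simp
  | succ k ih =>
    rw [hstep, ih]
    push_cast
    ring_nf
  | pred k ih =>
    have := hstep (-k - 1) (s - 1)
    rw [sub_add_cancel, sub_add_cancel] at this
    rw [← this, ih]
    push_cast
    ring_nf

theorem IsSFT.exists_suspension_rep (hX : IsSFT F X)
    (hS : ∀ (x : X) (n : ℤ), (S x : ℤ → A) n = (x : ℤ → A) (n + 1))
    (hident : ∀ (x : X) (s : ℝ), q (x, s + 1) = q (S x, s)) (hq : Function.Surjective q)
    (y : Y) (r : ℝ) : ∃ (x : X) (s : ℝ), q (x, s) = y ∧ r ≤ s ∧ s < r + 1 := by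
  obtain ⟨⟨x, s⟩, rfl⟩ := hq y
  refine ⟨hX.shiftBy ⌊s - r⌋ x, Int.fract (s - r) + r, ?_, ?_, ?_⟩
  · rw [hX.suspension_shiftBy hS hident, Int.fract]
    ring_nf
  · linarith [Int.fract_nonneg (s - r)]
  · linarith [Int.fract_lt_one (s - r)]

theorem IsSFT.dist_le_of_eqOn [MetricSpace Y] (hX : IsSFT F X)
    (hS : ∀ (x : X) (n : ℤ), (S x : ℤ → A) n = (x : ℤ → A) (n + 1))
    (hident : ∀ (x : X) (s : ℝ), q (x, s + 1) = q (S x, s)) {dS : X → X → ℝ}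
    (hdS0 : ∀ x : X, dS x x = 0)
    (hdS : ∀ x y : X, x ≠ y → dS x y =
      (1 / 2 : ℝ) ^ sInf {n : ℕ | ∃ i : ℤ, i.natAbs = n ∧ (x : ℤ → A) i ≠ (y : ℤ → A) i})
    (hH : ∀ x y : X, ∀ s ∈ Set.Icc (0:ℝ) 1,
      dist (q (x, s)) (q (y, s)) ≤ (1 - s) * dS x y + s * dS (S x) (S y))
    {N : ℕ} {x y : X} {s : ℝ}
    (h : ∀ i : ℤ, ⌊s⌋ - N ≤ i → i ≤ ⌊s⌋ + N + 1 → (x : ℤ → A) i = (y : ℤ → A) i) :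
    dist (q (x, s)) (q (y, s)) ≤ (1 / 2 : ℝ) ^ N := by
  have hq (z : X) : q (z, s) = q (hX.shiftBy ⌊s⌋ z, Int.fract s) := by
    rw [hX.suspension_shiftBy hS hident, Int.fract_add_floor]
  set x' := hX.shiftBy ⌊s⌋ x
  set y' := hX.shiftBy ⌊s⌋ y
  have hagree (i : ℤ) (hi₀ : -N ≤ i) (hi₁ : i ≤ N + 1) : (x' : ℤ → A) i = (y' : ℤ → A) i :=
    h _ (by omega) (by omega)
  have hd₀ : dS x' y' ≤ (1 / 2 : ℝ) ^ N :=
    le_half_pow_of_eqOn hdS0 hdS fun i hi => hagree i (by omega) (by omega)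
  have hd₁ : dS (S x') (S y') ≤ (1 / 2 : ℝ) ^ N :=
    le_half_pow_of_eqOn hdS0 hdS fun i hi => by
      rw [hS, hS]
      exact hagree (i + 1) (by omega) (by omega)
  have hfract : Int.fract s ∈ Set.Icc (0 : ℝ) 1 := ⟨Int.fract_nonneg s, (Int.fract_lt_one s).le⟩
  rw [hq, hq]
  calc _ ≤ (1 - Int.fract s) * dS x' y' + Int.fract s * dS (S x') (S y') := hH _ _ _ hfract
    _ ≤ (1 - Int.fract s) * (1 / 2 : ℝ) ^ N + Int.fract s * (1 / 2 : ℝ) ^ N :=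
      add_le_add (mul_le_mul_of_nonneg_left hd₀ (by linarith [hfract.2]))
        (mul_le_mul_of_nonneg_left hd₁ hfract.1)
    _ = (1 / 2 : ℝ) ^ N := by ring

end Suspension

theorem stmt_19_general {A : Type*} [Fintype A] [TopologicalSpace A] [DiscreteTopology A]
    (Sft : Set (ℤ → A)) (F : Finset (List A))
    (hSFT : ∀ x : ℤ → A, x ∈ Sft ↔
      ∀ w ∈ F, ∀ n : ℤ, ¬ (∀ i : Fin w.length, x (n + (i : ℕ)) = w.get i))
    (S : Sft → Sft) (hS : ∀ (x : Sft) (n : ℤ), (S x : ℤ → A) n = (x : ℤ → A) (n + 1))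
    (htrans : ∀ U V : Set Sft, IsOpen U → IsOpen V → U.Nonempty → V.Nonempty →
      ∃ n : ℕ, ((S^[n] '' U) ∩ V).Nonempty)
    (dS : Sft → Sft → ℝ)
    (hdS0 : ∀ x : Sft, dS x x = 0)
    (hdS : ∀ x y : Sft, x ≠ y → dS x y =
      (1 / 2 : ℝ) ^ sInf {n : ℕ | ∃ i : ℤ, i.natAbs = n ∧ (x : ℤ → A) i ≠ (y : ℤ → A) i})
    {Y : Type*} [MetricSpace Y]
    (q : Sft × ℝ → Y) (hqsurj : Function.Surjective q)
    (hident : ∀ (x : Sft) (s : ℝ), q (x, s + 1) = q (S x, s))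
    (φ : ℝ → Y → Y) (hφ : ∀ (t : ℝ) (x : Sft) (s : ℝ), φ t (q (x, s)) = q (x, s + t))
    (hH : ∀ x y : Sft, ∀ s ∈ Set.Icc (0:ℝ) 1,
      dist (q (x, s)) (q (y, s)) ≤ (1 - s) * dS x y + s * dS (S x) (S y)) :
    ∀ δ > (0:ℝ), ∃ R > (0:ℝ), ∀ y : Y, ∀ t ≥ (0:ℝ),
      ∃ (y' : Y) (p : ℝ), 0 < p ∧ p ≤ t + R ∧ φ p y' = y' ∧
        ∀ s ∈ Set.Icc (0:ℝ) t, dist (φ s y) (φ s y') < δ := by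
  have hX : IsSFT F Sft := hSFT
  intro δ hδ
  obtain ⟨N, hN⟩ := exists_pow_lt_of_lt_one hδ (by norm_num : (1 / 2 : ℝ) < 1)
  set W := F.sup List.length
  obtain ⟨C, hC⟩ := hX.exists_isConnector_le hS htrans W
  refine ⟨C + 2 * N + W + 3, by positivity, fun y t ht => ?_⟩
  -- `N ≤ s` keeps the margin of `N` sites before time `0` inside `[0, l)`
  obtain ⟨x, s, rfl, hNs, hsN⟩ := hX.exists_suspension_rep hS hident hqsurj y N
  obtain ⟨z, p, hp, hpl, hzp, hzx⟩ := hX.exists_periodic_eqOn (fun _ hw => Finset.le_sup hw) hC x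
    (l := ⌈t⌉₊ + 2 * N + W + 2) (by omega) (by omega)
  refine ⟨q (z, s), p, by positivity, ?_, ?_, fun u hu => ?_⟩
  · have : (p : ℝ) ≤ ⌈t⌉₊ + 2 * N + W + 2 + C := by exact_mod_cast hpl
    linarith [Nat.ceil_lt_add_one ht]
  · rw [hφ, ← Int.cast_natCast, ← hX.suspension_shiftBy hS hident, hzp]
  · have hfloor₀ : (N : ℤ) ≤ ⌊s + u⌋ := Int.le_floor.2 (by push_cast; linarith [hu.1])
    have hfloor₁ : ⌊s + u⌋ < N + ⌈t⌉₊ + 1 :=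
      Int.floor_lt.2 (by push_cast; linarith [hu.2, Nat.le_ceil t])
    rw [hφ, hφ]
    exact (hX.dist_le_of_eqOn hS hident hdS0 hdS hH fun i hi₀ hi₁ =>
      (hzx i (by omega) (by omega)).symm).trans_lt hN

/-- **The suspension of a transitive subshift of finite type has the weak periodic orbit
closing property.**
`Sft` is a topologically transitive subshift of finite type over the finite alphabet `A`
(forbidden words `F`), with shift map `S` and the usual metric `dS` (distance `(1/2)^i`
where `i` is the least absolute index at which two sequences differ).  `Y` is the
suspension with constant roof `1`, presented by `q : Sft × ℝ → Y` with the
identification `q (x, s + 1) = q (S x, s)` and suspension flow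
`φ t (q (x, s)) = q (x, s + t)`, and the metric on `Y` is the Bowen–Walters metric
(largest metric bounded by the horizontal and vertical distances).  Then for every
`δ > 0` there is `R > 0` such that every orbit segment `(y, t)` is `δ`-shadowed by a
periodic point of the flow of period at most `t + R`. -/
theorem stmt_19 {A : Type*} [Fintype A] [TopologicalSpace A] [DiscreteTopology A]
    (Sft : Set (ℤ → A)) (F : Finset (List A))
    (hSFT : ∀ x : ℤ → A, x ∈ Sft ↔
      ∀ w ∈ F, ∀ n : ℤ, ¬ (∀ i : Fin w.length, x (n + (i : ℕ)) = w.get i))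
    (S : Sft → Sft) (hS : ∀ (x : Sft) (n : ℤ), (S x : ℤ → A) n = (x : ℤ → A) (n + 1))
    (htrans : ∀ U V : Set Sft, IsOpen U → IsOpen V → U.Nonempty → V.Nonempty →
      ∃ n : ℕ, ((S^[n] '' U) ∩ V).Nonempty)
    (dS : Sft → Sft → ℝ)
    (hdS0 : ∀ x : Sft, dS x x = 0)
    (hdS : ∀ x y : Sft, x ≠ y → dS x y =
      (1 / 2 : ℝ) ^ sInf {n : ℕ | ∃ i : ℤ, i.natAbs = n ∧ (x : ℤ → A) i ≠ (y : ℤ → A) i})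
    {Y : Type*} [MetricSpace Y]
    (q : Sft × ℝ → Y) (hqsurj : Function.Surjective q)
    (hident : ∀ (x : Sft) (s : ℝ), q (x, s + 1) = q (S x, s))
    (φ : ℝ → Y → Y) (hφ : ∀ (t : ℝ) (x : Sft) (s : ℝ), φ t (q (x, s)) = q (x, s + t))
    (hH : ∀ x y : Sft, ∀ s ∈ Set.Icc (0:ℝ) 1,
      dist (q (x, s)) (q (y, s)) ≤ (1 - s) * dS x y + s * dS (S x) (S y))
    (hV : ∀ x : Sft, ∀ s ∈ Set.Icc (0:ℝ) 1, ∀ t ∈ Set.Icc (0:ℝ) 1,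
      dist (q (x, s)) (q (x, t)) ≤ |s - t|)
    (hmax : ∀ ρ : Y → Y → ℝ,
      (∀ a, ρ a a = 0) → (∀ a b, ρ a b = ρ b a) → (∀ a b c, ρ a c ≤ ρ a b + ρ b c) →
      (∀ x y : Sft, ∀ s ∈ Set.Icc (0:ℝ) 1,
        ρ (q (x, s)) (q (y, s)) ≤ (1 - s) * dS x y + s * dS (S x) (S y)) →
      (∀ x : Sft, ∀ s ∈ Set.Icc (0:ℝ) 1, ∀ t ∈ Set.Icc (0:ℝ) 1,
        ρ (q (x, s)) (q (x, t)) ≤ |s - t|) →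
      ∀ a b, ρ a b ≤ dist a b) :
    ∀ δ > (0:ℝ), ∃ R > (0:ℝ), ∀ y : Y, ∀ t ≥ (0:ℝ),
      ∃ (y' : Y) (p : ℝ), 0 < p ∧ p ≤ t + R ∧ φ p y' = y' ∧
        ∀ s ∈ Set.Icc (0:ℝ) t, dist (φ s y) (φ s y') < δ :=
  stmt_19_general Sft F hSFT S hS htrans dS hdS0 hdS q hqsurj hident φ hφ hH
end
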